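/- Let W be independent of (X,Y). If a random variable U satisfies I(U;X) = ε and H(Y|U,X,W) = 0, then H(U) ≥ min_{x∈𝒳} H(Y|X=x) + ε. -/

import Mathlib

/-- Shannon entropy (base 2) of a finitely supported distribution given as a function. -/
noncomputable def ent {α : Type*} [Fintype α] (q : α → ℝ) : ℝ :=
  - ∑ a, q a * Real.logb 2 (q a)

/-! Since `W` is independent of `(X, Y)` and `Y` is a function of `(U, X, W)`,
`H(X,Y) + H(W) = H(X,Y,W) ≤ H(X,Y,W,U) = H(X,W,U) ≤ H(X,U) + H(W)`.
Hence `H(Y|X) = H(X,Y) - H(X) ≤ H(X,U) - H(X) = H(U) - I(U;X)`, and `H(Y|X)`, the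
`P_X`-average of the `H(Y|X=x)`, is at least their minimum over the support of `X`. -/

open Finset Real

lemma ent_comp_equiv {α β : Type*} [Fintype α] [Fintype β] (e : α ≃ β) (q : β → ℝ) :
    ent (q ∘ e) = ent q := by
  simp only [ent, Function.comp_apply, e.sum_comp (fun b => q b * logb 2 (q b))]

lemma mul_log_sub_mul_log_le {x y : ℝ} (hx : 0 ≤ x) (hy : 0 ≤ y) (hxy : 0 < x → 0 < y) :
    x * log y - x * log x ≤ y - x := by
  rcases hx.eq_or_lt with rfl | hx
  · simpa using hy
  have hy := hxy hx
  have h := mul_le_mul_of_nonneg_left (log_le_sub_one_of_pos (div_pos hy hx)) hx.le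
  rwa [log_div hy.ne' hx.ne', mul_sub, mul_sub, mul_div_cancel₀ _ hx.ne', mul_one] at h

lemma sum_mul_logb_le_sum_mul_logb {α : Type*} [Fintype α] (f g : α → ℝ)
    (hf : ∀ a, 0 ≤ f a) (hg : ∀ a, 0 ≤ g a) (hfg : ∀ a, 0 < f a → 0 < g a)
    (hsum : ∑ a, g a ≤ ∑ a, f a) :
    ∑ a, f a * logb 2 (g a) ≤ ∑ a, f a * logb 2 (f a) := by
  have hlog : ∑ a, f a * log (g a) ≤ ∑ a, f a * log (f a) := by
    have := sum_le_sum fun a (_ : a ∈ univ) => mul_log_sub_mul_log_le (hf a) (hg a) (hfg a)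
    rw [sum_sub_distrib, sum_sub_distrib] at this
    linarith
  simp only [logb, mul_div_assoc', ← sum_div]
  exact div_le_div_of_nonneg_right hlog (log_pos one_lt_two).le

section Marginals

variable {A B : Type*} [Fintype A] [Fintype B]

lemma ent_fst_le (q : A × B → ℝ) (h0 : ∀ z, 0 ≤ q z) {qA : A → ℝ}
    (hqA : ∀ a, ∑ b, q (a, b) = qA a) : ent qA ≤ ent q := by
  rw [ent, ent, neg_le_neg_iff, Fintype.sum_prod_type]
  refine sum_le_sum fun a _ => ?_
  rw [← hqA, sum_mul]
  refine sum_le_sum fun b _ => ?_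
  rcases (h0 (a, b)).eq_or_lt with h | h
  · simp [← h]
  · exact mul_le_mul_of_nonneg_left
      (logb_le_logb_of_le one_lt_two h (single_le_sum (fun b' _ => h0 (a, b')) (mem_univ b)))
      h.le

lemma ent_le_ent_add_ent (q : A × B → ℝ) (h0 : ∀ z, 0 ≤ q z) (h1 : ∑ z, q z = 1)
    {qA : A → ℝ} {qB : B → ℝ} (hqA : ∀ a, ∑ b, q (a, b) = qA a)
    (hqB : ∀ b, ∑ a, q (a, b) = qB b) :
    ent q ≤ ent qA + ent qB := by
  have hqA_le : ∀ z, q z ≤ qA z.1 := fun z =>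
    hqA z.1 ▸ single_le_sum (fun b _ => h0 (z.1, b)) (mem_univ z.2)
  have hqB_le : ∀ z, q z ≤ qB z.2 := fun z =>
    hqB z.2 ▸ single_le_sum (fun a _ => h0 (a, z.2)) (mem_univ z.1)
  have hqA1 : ∑ a, qA a = 1 := by simp only [← hqA, ← Fintype.sum_prod_type, h1]
  have hqB1 : ∑ b, qB b = 1 := by simp only [← hqB, ← Fintype.sum_prod_type_right, h1]
  have gibbs := sum_mul_logb_le_sum_mul_logb q (fun z => qA z.1 * qB z.2) h0
    (fun z => mul_nonneg ((h0 z).trans (hqA_le z)) ((h0 z).trans (hqB_le z)))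
    (fun z hz => mul_pos (hz.trans_le (hqA_le z)) (hz.trans_le (hqB_le z)))
    (by rw [h1, Fintype.sum_prod_type, ← Fintype.sum_mul_sum, hqA1, hqB1, one_mul])
  have hsplit : ∀ z, q z * logb 2 (qA z.1 * qB z.2)
      = q z * logb 2 (qA z.1) + q z * logb 2 (qB z.2) := fun z => by
    rcases (h0 z).eq_or_lt with h | h
    · simp [← h]
    · rw [logb_mul (h.trans_le (hqA_le z)).ne' (h.trans_le (hqB_le z)).ne', mul_add]
  have hA : ∑ z, q z * logb 2 (qA z.1) = ∑ a, qA a * logb 2 (qA a) := by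
    simp only [Fintype.sum_prod_type, ← sum_mul, hqA]
  have hB : ∑ z, q z * logb 2 (qB z.2) = ∑ b, qB b * logb 2 (qB b) := by
    simp only [Fintype.sum_prod_type_right, ← sum_mul, hqB]
  simp only [hsplit, sum_add_distrib, hA, hB] at gibbs
  simp only [ent]
  linarith

lemma ent_mul (f : A → ℝ) (g : B → ℝ) (hf : ∑ a, f a = 1) (hg : ∑ b, g b = 1) :
    ent (fun z : A × B => f z.1 * g z.2) = ent f + ent g := by
  have hsplit : ∀ z : A × B, f z.1 * g z.2 * logb 2 (f z.1 * g z.2)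
      = f z.1 * logb 2 (f z.1) * g z.2 + g z.2 * logb 2 (g z.2) * f z.1 := fun z => by
    rcases eq_or_ne (f z.1) 0 with h | h
    · simp [h]
    rcases eq_or_ne (g z.2) 0 with h' | h'
    · simp [h']
    rw [logb_mul h h']
    ring
  simp only [ent, hsplit, sum_add_distrib, Fintype.sum_prod_type, ← mul_sum, hg]
  rw [sum_comm]
  simp only [← mul_sum, hf, mul_one, neg_add]

lemma sum_mul_ent_div_eq (q : A × B → ℝ) (h0 : ∀ z, 0 ≤ q z) {qA : A → ℝ}
    (hqA : ∀ a, ∑ b, q (a, b) = qA a) :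
    ∑ a, qA a * ent (fun b => q (a, b) / qA a) = ent q - ent qA := by
  have hslice : ∀ a, qA a * ent (fun b => q (a, b) / qA a)
      = - ∑ b, q (a, b) * logb 2 (q (a, b)) + qA a * logb 2 (qA a) := by
    intro a
    rcases (hqA a ▸ sum_nonneg fun b _ => h0 (a, b) : 0 ≤ qA a).eq_or_lt with h | h
    · have hz : ∀ b, q (a, b) = 0 := fun b =>
        (sum_eq_zero_iff_of_nonneg fun b _ => h0 (a, b)).1 (h ▸ hqA a) b (mem_univ b)
      simp [← h, hz, ent]
    · have hterm : ∀ b, qA a * (q (a, b) / qA a * logb 2 (q (a, b) / qA a))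
          = q (a, b) * logb 2 (q (a, b)) - q (a, b) * logb 2 (qA a) := fun b => by
        rcases (h0 (a, b)).eq_or_lt with h' | h'
        · simp [← h']
        · rw [logb_div h'.ne' h.ne', ← mul_assoc, mul_div_cancel₀ _ h.ne', mul_sub]
      rw [ent, mul_neg, mul_sum]
      simp only [hterm, sum_sub_distrib, ← sum_mul, hqA]
      ring
  rw [sum_congr rfl fun a _ => hslice a]
  simp only [sum_add_distrib, sum_neg_distrib, ent, Fintype.sum_prod_type]
  ring

end Marginals

lemma Finset.inf'_le_sum_mul {ι : Type*} [Fintype ι] {S : Finset ι} (hS : S.Nonempty)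
    (f w : ι → ℝ) (hw0 : ∀ i, 0 ≤ w i) (hw1 : ∑ i, w i = 1) (hwS : ∀ i ∉ S, w i = 0) :
    S.inf' hS f ≤ ∑ i, w i * f i := by
  have hS1 : ∑ i ∈ S, w i = 1 := by
    rw [← hw1, sum_subset (subset_univ S) fun i _ hi => hwS i hi]
  calc S.inf' hS f ≤ S.centerMass w f := inf_le_centerMass (fun i _ => hw0 i) (hS1 ▸ one_pos)
    _ = ∑ i, w i * f i := by
      rw [centerMass_eq_of_sum_1 _ _ hS1]
      exact sum_subset (subset_univ S) fun i _ hi => by rw [hwS i hi, zero_smul]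

section Reindexing

variable {A B C D : Type*} [Fintype A] [Fintype B] [Fintype C] [Fintype D]

lemma ent_add_ent_le_of_sum_eq_mul (q : A × B × C × D → ℝ) (h0 : ∀ z, 0 ≤ q z)
    {qAB : A × B → ℝ} {qC : C → ℝ} (hqAB : ∑ z, qAB z = 1) (hqC : ∑ c, qC c = 1)
    (hmul : ∀ a b c, ∑ d, q (a, b, c, d) = qAB (a, b) * qC c) :
    ent qAB + ent qC ≤ ent q := by
  let e : ((A × B) × C) × D ≃ A × B × C × D :=
    (Equiv.prodAssoc (A × B) C D).trans (Equiv.prodAssoc A B (C × D))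
  rw [← ent_mul qAB qC hqAB hqC, ← ent_comp_equiv e]
  exact ent_fst_le (q ∘ e) (fun z => h0 (e z)) fun z => hmul z.1.1 z.1.2 z.2

lemma ent_le_ent_add_ent_of_sum_eq (q : A × B × C → ℝ) (h0 : ∀ z, 0 ≤ q z)
    {qAC : A × C → ℝ} {qB : B → ℝ} (hqAC : ∀ a c, ∑ b, q (a, b, c) = qAC (a, c))
    (hqB : ∀ b, ∑ a, ∑ c, q (a, b, c) = qB b) (hqB1 : ∑ b, qB b = 1) :
    ent q ≤ ent qAC + ent qB := by
  let e : (A × C) × B ≃ A × B × C :=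
    (Equiv.prodAssoc A C B).trans ((Equiv.refl A).prodCongr (Equiv.prodComm C B))
  have hqB' : ∀ b, ∑ z : A × C, q (e (z, b)) = qB b := fun b => by
    rw [Fintype.sum_prod_type, ← hqB]
    rfl
  rw [← ent_comp_equiv e]
  refine ent_le_ent_add_ent (q ∘ e) (fun z => h0 (e z)) ?_ (fun z => hqAC z.1 z.2) hqB'
  rw [Fintype.sum_prod_type_right, ← hqB1]
  exact sum_congr rfl fun b _ => hqB' b

end Reindexing

theorem stmt4_general {X Y W U : Type*} [Fintype X] [Fintype Y] [Fintype W] [Fintype U]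
    (p : X × Y × W × U → ℝ) (hpos : ∀ z, 0 ≤ p z) (hsum : ∑ z, p z = 1)
    (pX : X → ℝ) (hpX : ∀ x, pX x = ∑ y, ∑ w, ∑ u, p (x, y, w, u))
    (pW : W → ℝ) (hpW : ∀ w, pW w = ∑ x, ∑ y, ∑ u, p (x, y, w, u))
    (pU : U → ℝ)
    (pXY : X × Y → ℝ) (hpXY : ∀ x y, pXY (x, y) = ∑ w, ∑ u, p (x, y, w, u))
    (pXU : X × U → ℝ) (hpXU : ∀ x u, pXU (x, u) = ∑ y, ∑ w, p (x, y, w, u))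
    (pXWU : X × W × U → ℝ) (hpXWU : ∀ x w u, pXWU (x, w, u) = ∑ y, p (x, y, w, u))
    -- W is independent of (X,Y)
    (hindep : ∀ x y w, (∑ u, p (x, y, w, u)) = pXY (x, y) * pW w)
    (ε : ℝ)
    -- I(U;X) = ε
    (hI : ent pU + ent pX - ent pXU = ε)
    -- H(Y|U,X,W) = 0
    (hH : ent p - ent pXWU = 0)
    -- S is the support of X
    (S : Finset X) (hS : ∀ x, x ∈ S ↔ 0 < pX x) (hSne : S.Nonempty) :
    -- H(U) ≥ min_{x : P_X(x)>0} H(Y|X=x) + ε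
    ent pU ≥ S.inf' hSne (fun x => ent (fun y => pXY (x, y) / pX x)) + ε := by
  have hpXY0 : ∀ z, 0 ≤ pXY z := fun ⟨x, y⟩ => by
    rw [hpXY]; exact sum_nonneg fun _ _ => sum_nonneg fun _ _ => hpos _
  have hpX0 : ∀ x, 0 ≤ pX x := fun x => by
    rw [hpX]; exact sum_nonneg fun _ _ => sum_nonneg fun _ _ => sum_nonneg fun _ _ => hpos _
  have hpX1 : ∑ x, pX x = 1 := by simpa [hpX, Fintype.sum_prod_type] using hsum
  have hpXY1 : ∑ z, pXY z = 1 := by simpa [hpXY, Fintype.sum_prod_type] using hsum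
  have hpW1 : ∑ w, pW w = 1 := by
    simp only [hpW]
    rw [sum_comm]
    simpa [Fintype.sum_prod_type, sum_comm (γ := W)] using hsum
  have hjoint : ent pXY + ent pW ≤ ent p :=
    ent_add_ent_le_of_sum_eq_mul p hpos hpXY1 hpW1 hindep
  have hXWU : ent pXWU ≤ ent pXU + ent pW :=
    ent_le_ent_add_ent_of_sum_eq pXWU
      (fun z => by rw [hpXWU]; exact sum_nonneg fun _ _ => hpos _)
      (fun x u => by simp only [hpXU, hpXWU]; exact sum_comm)
      (fun w => by simp only [hpW, hpXWU]; exact sum_congr rfl fun x _ => sum_comm) hpW1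
  have hcond : ∑ x, pX x * ent (fun y => pXY (x, y) / pX x) = ent pXY - ent pX :=
    sum_mul_ent_div_eq pXY hpXY0 fun x => by simp [hpX, hpXY]
  have hmin := inf'_le_sum_mul hSne (fun x => ent (fun y => pXY (x, y) / pX x)) pX hpX0 hpX1
    fun x hx => le_antisymm (not_lt.1 fun h => hx ((hS x).2 h)) (hpX0 x)
  linarith

/-- If `W ⊥ (X,Y)`, `I(U;X) = ε` and `H(Y|U,X,W) = 0`, then
`H(U) ≥ min_{x ∈ 𝒳} H(Y|X=x) + ε`, the minimum being over `x` with `P_X(x) > 0`. -/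
theorem stmt4 {X Y W U : Type*} [Fintype X] [Fintype Y] [Fintype W] [Fintype U]
    (p : X × Y × W × U → ℝ) (hpos : ∀ z, 0 ≤ p z) (hsum : ∑ z, p z = 1)
    (pX : X → ℝ) (hpX : ∀ x, pX x = ∑ y, ∑ w, ∑ u, p (x, y, w, u))
    (pW : W → ℝ) (hpW : ∀ w, pW w = ∑ x, ∑ y, ∑ u, p (x, y, w, u))
    (pU : U → ℝ) (hpU : ∀ u, pU u = ∑ x, ∑ y, ∑ w, p (x, y, w, u))
    (pXY : X × Y → ℝ) (hpXY : ∀ x y, pXY (x, y) = ∑ w, ∑ u, p (x, y, w, u))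
    (pXU : X × U → ℝ) (hpXU : ∀ x u, pXU (x, u) = ∑ y, ∑ w, p (x, y, w, u))
    (pXWU : X × W × U → ℝ) (hpXWU : ∀ x w u, pXWU (x, w, u) = ∑ y, p (x, y, w, u))
    -- W is independent of (X,Y)
    (hindep : ∀ x y w, (∑ u, p (x, y, w, u)) = pXY (x, y) * pW w)
    (ε : ℝ) (hε : 0 ≤ ε)
    -- I(U;X) = ε
    (hI : ent pU + ent pX - ent pXU = ε)
    -- H(Y|U,X,W) = 0
    (hH : ent p - ent pXWU = 0)
    -- S is the support of X
    (S : Finset X) (hS : ∀ x, x ∈ S ↔ 0 < pX x) (hSne : S.Nonempty) :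
    -- H(U) ≥ min_{x : P_X(x)>0} H(Y|X=x) + ε
    ent pU ≥ S.inf' hSne (fun x => ent (fun y => pXY (x, y) / pX x)) + ε :=
  stmt4_general p hpos hsum pX hpX pW hpW pU pXY hpXY pXU hpXU pXWU hpXWU hindep ε hI hH S hS hSne
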